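/- For all integers m, k ≥ 1 and every integer j with 1 ≤ j ≤ k+1, if f(j·m, x, s) ≠ 0 then d(0, m, s, k, j) = s^{−k} · (fac(k+1, x, s, m) / f(j·m, x, s)) · (−s)^{m·binom(k,2)} · q^{binom(k,2)·binom(m+1,2)} · d(0, m, q^m·s, k−1, j−1). -/

import Mathlib

open Finset

variable {K : Type*} [Field K]

noncomputable def qFibPos (q x t : K) : ℕ → K
  | 0 => 0
  | 1 => 1
  | n + 2 => x * qFibPos q x t (n + 1) + q ^ n * t * qFibPos q x t n

noncomputable def qFibNeg (q x t : K) : ℕ → K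
  | 0 => 0
  | 1 => q / t
  | m + 2 => (qFibNeg q x t m - x * qFibNeg q x t (m + 1)) * q ^ (m + 2) / t

/-- The Carlitz q-Fibonacci polynomial `f(n, x, t)` for `n : ℤ`, defined by `f 0 = 0`,
`f 1 = 1` and `f n = x * f (n-1) + q^(n-2) * t * f (n-2)`, solved backwards for `n < 0`. -/
noncomputable def qFib (q x t : K) : ℤ → K
  | Int.ofNat n => qFibPos q x t n
  | Int.negSucc m => qFibNeg q x t (m + 1)

/-- `fac(k, x, t, m) = ∏_{i=1}^{k} f(i·m, x, t)`. -/
noncomputable def qFac (q x t : K) (k m : ℕ) : K :=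
  ∏ i ∈ Finset.range k, qFib q x t (((i : ℤ) + 1) * m)

/-- The determinant
`d(n, m, s, k, j) = det( f(n+m(i+[i≥j]),x,s)^h · f(n+m(i+[i≥j])-1,x,qs)^{k-h} )_{i,h=0}^{k}`. -/
noncomputable def ddet (q x s : K) (n : ℤ) (m k j : ℕ) : K :=
  Matrix.det (Matrix.of fun i h : Fin (k + 1) =>
    qFib q x s (n + m * ((i : ℕ) + if j ≤ (i : ℕ) then 1 else 0)) ^ (h : ℕ) *
      qFib q x (q * s) (n + m * ((i : ℕ) + if j ≤ (i : ℕ) then 1 else 0) - 1) ^ (k - (h : ℕ)))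

/-!
Both determinants are homogeneous Vandermonde determinants `∏_{i<l} (w_l z_i - w_i z_l)` with
`w_i = f(n_i, s)`, `z_i = f(n_i - 1, qs)`. Row `0` has `w_0 = f(0) = 0` and `z_0 = f(-1, qs) = 1/s`,
so it contributes `s^{-k} ∏_{i ≥ 1} f(n_i, s) = s^{-k} fac(k+1, x, s, m) / f(jm, x, s)`.
By the addition formula `f(n+m, t) = f(m+1, t) f(n, q^m t) + q^m t f(m, t) f(n-1, q^{m+1} t)`,
the remaining rows are one fixed linear substitution of the rows of the determinant with
parameter `q^m s`; such a substitution multiplies a homogeneous Vandermonde determinant of size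
`k` by `Δ^{binom(k,2)}`, and a Cassini-type identity gives `Δ = (-s)^m q^{binom(m+1,2)}`.
-/

theorem eq_of_two_step_recurrence {R : Type*} [CommRing R] [IsDomain R] {a b u c : ℤ → R}
    (hc : ∀ n, c n ≠ 0) (ha : ∀ n, a (n + 2) = u n * a (n + 1) + c n * a n)
    (hb : ∀ n, b (n + 2) = u n * b (n + 1) + c n * b n) (h₀ : a 0 = b 0) (h₁ : a 1 = b 1) :
    a = b := by
  suffices h : ∀ n, a n = b n ∧ a (n + 1) = b (n + 1) from funext fun n => (h n).1
  intro n
  induction n using Int.induction_on with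
  | zero => exact ⟨h₀, by simpa using h₁⟩
  | succ n ih =>
    refine ⟨ih.2, ?_⟩
    rw [add_assoc, one_add_one_eq_two, ha, hb, ih.1, ih.2]
  | pred n ih =>
    refine ⟨?_, by simpa using ih.1⟩
    have ha' := ha (-n - 1)
    have hb' := hb (-n - 1)
    rw [show -(n : ℤ) - 1 + 2 = -n + 1 by ring, show -(n : ℤ) - 1 + 1 = -n by ring] at ha' hb'
    rw [ih.1, ih.2, hb'] at ha'
    exact mul_left_cancel₀ (hc _) (add_left_cancel ha').symm

section qFib

variable (q x t : K)

@[simp] lemma qFib_zero : qFib q x t 0 = 0 := rfl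

@[simp] lemma qFib_one : qFib q x t 1 = 1 := rfl

@[simp] lemma qFib_neg_one : qFib q x t (-1) = q / t := rfl

lemma qFib_neg_natCast (n : ℕ) : qFib q x t (-n) = qFibNeg q x t n := by
  cases n <;> rfl

lemma qFib_natCast_add_two (n : ℕ) :
    qFib q x t (n + 2) = x * qFib q x t (n + 1) + q ^ n * t * qFib q x t n :=
  qFibPos.eq_3 q x t n

variable {q t}

lemma qFib_add_two (hq : q ≠ 0) (ht : t ≠ 0) (n : ℤ) :
    qFib q x t (n + 2) = x * qFib q x t (n + 1) + q ^ n * t * qFib q x t n := by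
  obtain ⟨n, rfl | rfl⟩ := Int.eq_nat_or_neg n
  · rw [zpow_natCast]
    exact qFib_natCast_add_two q x t n
  match n with
  | 0 => simpa using qFib_natCast_add_two q x t 0
  | 1 =>
    simp only [Nat.cast_one, Int.reduceNeg, Int.reduceAdd, qFib_one, neg_add_cancel, qFib_zero,
      mul_zero, zpow_neg, zpow_ofNat, pow_one, qFib_neg_one, zero_add]
    field_simp
  | n + 2 =>
    rw [show -((n + 2 : ℕ) : ℤ) + 2 = -(n : ℤ) by push_cast; ring,
      show -((n + 2 : ℕ) : ℤ) + 1 = -((n + 1 : ℕ) : ℤ) by push_cast; ring,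
      qFib_neg_natCast, qFib_neg_natCast, qFib_neg_natCast, qFibNeg, zpow_neg, zpow_natCast]
    field_simp
    ring

lemma qFib_add (hq : q ≠ 0) (ht : t ≠ 0) (n m : ℤ) :
    qFib q x t (n + m) = qFib q x t (m + 1) * qFib q x (q ^ m * t) n +
      q ^ m * t * qFib q x t m * qFib q x (q ^ (m + 1) * t) (n - 1) := by
  refine congrFun (eq_of_two_step_recurrence (a := fun n => qFib q x t (n + m))
    (b := fun n => qFib q x t (m + 1) * qFib q x (q ^ m * t) n +
      q ^ m * t * qFib q x t m * qFib q x (q ^ (m + 1) * t) (n - 1))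
    (u := fun _ => x) (c := fun n => q ^ (n + m) * t)
    (fun n => mul_ne_zero (zpow_ne_zero _ hq) ht) (fun n => ?_) (fun n => ?_) ?_ ?_) n
  · rw [show n + 2 + m = n + m + 2 by ring, show n + 1 + m = n + m + 1 by ring,
      qFib_add_two x hq ht]
  · have h₁ := qFib_add_two x hq (mul_ne_zero (zpow_ne_zero m hq) ht) n
    have h₂ := qFib_add_two x hq (mul_ne_zero (zpow_ne_zero (m + 1) hq) ht) (n - 1)
    rw [← mul_assoc, ← zpow_add₀ hq] at h₁
    rw [← mul_assoc, ← zpow_add₀ hq, show n - 1 + (m + 1) = n + m by ring,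
      show n - 1 + 2 = n + 2 - 1 by ring, show n - 1 + 1 = n + 1 - 1 by ring] at h₂
    linear_combination qFib q x t (m + 1) * h₁ + q ^ m * t * qFib q x t m * h₂
  · simp only [zero_add, qFib_zero, mul_zero, zero_sub, qFib_neg_one, zpow_add_one₀ hq]
    field_simp
  · simp [add_comm]

lemma qFib_cassini (hq : q ≠ 0) (ht : t ≠ 0) (m : ℕ) :
    qFib q x t (m + 1) * (q ^ m * t * qFib q x (q * t) (m - 1)) -
      q ^ m * t * qFib q x t m * qFib q x (q * t) m = (-t) ^ m * q ^ (m + 1).choose 2 := by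
  induction m with
  | zero =>
    simp only [CharP.cast_eq_zero, zero_add, qFib_one, pow_zero, one_mul, zero_sub, qFib_neg_one,
      qFib_zero, mul_zero, sub_zero, Nat.choose_succ_self, mul_one]
    field_simp
  | succ m ih =>
    have h₁ := qFib_add_two x hq ht m
    have h₂ := qFib_add_two x hq (mul_ne_zero hq ht) (m - 1)
    rw [show (m : ℤ) - 1 + 2 = m + 1 by ring, show (m : ℤ) - 1 + 1 = m by ring, ← mul_assoc,
      zpow_sub_one₀ hq, zpow_natCast, inv_mul_cancel_right₀ hq] at h₂
    push_cast
    rw [add_sub_cancel_right, show (m : ℤ) + 1 + 1 = m + 2 by ring, Nat.choose_succ_succ' (m + 1),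
      Nat.choose_one_right, pow_add, pow_succ, pow_succ, h₁, h₂, zpow_natCast]
    linear_combination (-(q ^ m * q * t)) * ih

lemma qFib_add_natCast (hq : q ≠ 0) (ht : t ≠ 0) (n : ℤ) (m : ℕ) :
    qFib q x t (n + m) = qFib q x t (m + 1) * qFib q x (q ^ m * t) n +
      q ^ m * t * qFib q x t m * qFib q x (q * (q ^ m * t)) (n - 1) := by
  rw [qFib_add x hq ht, zpow_natCast,
    show q ^ ((m : ℤ) + 1) * t = q * (q ^ m * t) by rw [zpow_add_one₀ hq, zpow_natCast]; ring]

lemma qFib_mul_add_natCast_sub_one (hq : q ≠ 0) (ht : t ≠ 0) (n : ℤ) (m : ℕ) :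
    qFib q x (q * t) (n + m - 1) = qFib q x (q * t) m * qFib q x (q ^ m * t) n +
      q ^ m * t * qFib q x (q * t) (m - 1) * qFib q x (q * (q ^ m * t)) (n - 1) := by
  have hshift : q ^ ((m : ℤ) - 1) * (q * t) = q ^ m * t := by
    rw [zpow_sub_one₀ hq, zpow_natCast]
    field_simp
  rw [add_sub_assoc, qFib_add x hq (mul_ne_zero hq ht), sub_add_cancel, hshift,
    show q ^ (m : ℤ) * (q * t) = q * (q ^ m * t) by rw [zpow_natCast]; ring]

end qFib

lemma Fin.prod_univ_prod_Ioi_const {M : Type*} [CommMonoid M] (n : ℕ) (c : M) :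
    ∏ i : Fin n, ∏ _j ∈ Ioi i, c = c ^ n.choose 2 := by
  induction n with
  | zero => simp
  | succ n ih =>
    rw [Fin.prod_univ_succ, Fin.prod_Ioi_zero]
    simp_rw [Fin.prod_Ioi_succ]
    rw [ih, Fin.prod_const, ← pow_add, Nat.choose_succ_succ', Nat.choose_one_right]

namespace Matrix

variable {R : Type*} [CommRing R]

lemma det_projVandermonde_linear_combination {n : ℕ} (v w : Fin n → R) (a b c d : R) :
    (projVandermonde (fun i => a * v i + b * w i) (fun i => c * v i + d * w i)).det =
      (a * d - b * c) ^ n.choose 2 * (projVandermonde v w).det := by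
  simp_rw [det_projVandermonde, ← Fin.prod_univ_prod_Ioi_const, ← prod_mul_distrib]
  exact prod_congr rfl fun i _ => prod_congr rfl fun j _ => by ring

lemma det_projVandermonde_of_apply_zero_eq_zero {n : ℕ} (v w : Fin (n + 1) → R) (hv : v 0 = 0) :
    (projVandermonde v w).det =
      w 0 ^ n * (∏ i : Fin n, v i.succ) * (projVandermonde (Fin.tail v) (Fin.tail w)).det := by
  simp_rw [det_projVandermonde, Fin.prod_univ_succ, Fin.prod_Ioi_zero, Fin.prod_Ioi_succ, hv,
    zero_mul, sub_zero, prod_mul_distrib, prod_const, card_univ, Fintype.card_fin, Fin.tail]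
  ring

end Matrix

open Matrix

def skipIndex (j i : ℕ) : ℤ := i + if j ≤ i then 1 else 0

@[simp] lemma skipIndex_succ_zero (j : ℕ) : skipIndex (j + 1) 0 = 0 := by
  simp [skipIndex]

lemma skipIndex_succ_succ (j i : ℕ) : skipIndex (j + 1) (i + 1) = skipIndex j i + 1 := by
  simp only [skipIndex, add_le_add_iff_right]
  push_cast
  split_ifs <;> ring

lemma skipIndex_eq_succAbove {k j : ℕ} (hj : j < k + 2) (i : Fin (k + 1)) :
    skipIndex j i = (Fin.succAbove ⟨j, hj⟩ i : ℕ) := by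
  unfold skipIndex
  by_cases h : j ≤ i
  · rw [Fin.succAbove_of_le_castSucc _ _ (by simpa [Fin.le_def] using h)]
    simp [h]
  · rw [Fin.succAbove_of_castSucc_lt _ _ (by simpa [Fin.lt_def] using h)]
    simp [h]

lemma qFac_eq_mul_prod_skipIndex (q x t : K) (m : ℕ) {k j : ℕ} (hj : j ≤ k + 1) :
    qFac q x t (k + 2) m =
      qFib q x t ((j + 1 : ℤ) * m) *
        ∏ i : Fin (k + 1), qFib q x t (m * (skipIndex j i + 1)) := by
  have hj' : j < k + 2 := by omega
  rw [qFac, ← Fin.prod_univ_eq_prod_range, Fin.prod_univ_succAbove _ ⟨j, hj'⟩]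
  simp_rw [skipIndex_eq_succAbove hj', mul_comm (m : ℤ)]

lemma ddet_eq_det_projVandermonde (q x s : K) (n : ℤ) (m k j : ℕ) :
    ddet q x s n m k j =
      (projVandermonde (fun i : Fin (k + 1) => qFib q x s (n + m * skipIndex j i))
        (fun i => qFib q x (q * s) (n + m * skipIndex j i - 1))).det := by
  rw [ddet]
  congr
  ext i h
  rw [Fin.val_rev, Nat.add_sub_add_right]
  rfl

lemma ddet_zero_succ_succ {q s : K} (x : K) (hq : q ≠ 0) (hs : s ≠ 0) (m k j : ℕ) :
    ddet q x s 0 m (k + 1) (j + 1) =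
      s⁻¹ ^ (k + 1) * (∏ i : Fin (k + 1), qFib q x s (m * (skipIndex j i + 1))) *
        ((-s) ^ m * q ^ (m + 1).choose 2) ^ (k + 1).choose 2 * ddet q x (q ^ m * s) 0 m k j := by
  have hrow (i : Fin (k + 1)) :
      (0 : ℤ) + m * skipIndex (j + 1) i.succ = 0 + m * skipIndex j i + m := by
    rw [Fin.val_succ, skipIndex_succ_succ]
    ring
  have hv : Fin.tail (fun i : Fin (k + 2) => qFib q x s (0 + m * skipIndex (j + 1) i)) =
      fun i : Fin (k + 1) => qFib q x s (m + 1) * qFib q x (q ^ m * s) (0 + m * skipIndex j i) +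
        q ^ m * s * qFib q x s m * qFib q x (q * (q ^ m * s)) (0 + m * skipIndex j i - 1) :=
    funext fun i => by dsimp only [Fin.tail]; rw [hrow, qFib_add_natCast x hq hs]
  have hw :
      Fin.tail (fun i : Fin (k + 2) => qFib q x (q * s) (0 + m * skipIndex (j + 1) i - 1)) =
      fun i : Fin (k + 1) => qFib q x (q * s) m * qFib q x (q ^ m * s) (0 + m * skipIndex j i) +
        q ^ m * s * qFib q x (q * s) (m - 1) *
          qFib q x (q * (q ^ m * s)) (0 + m * skipIndex j i - 1) :=
    funext fun i => by dsimp only [Fin.tail]; rw [hrow, qFib_mul_add_natCast_sub_one x hq hs]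
  have hprod : ∏ i : Fin (k + 1), qFib q x s (0 + m * skipIndex (j + 1) i.succ) =
      ∏ i : Fin (k + 1), qFib q x s (m * (skipIndex j i + 1)) :=
    prod_congr rfl fun i _ => by rw [hrow]; ring_nf
  have hw₀ : qFib q x (q * s) (0 + m * skipIndex (j + 1) (0 : Fin (k + 2)) - 1) = s⁻¹ := by
    simp only [Fin.val_zero, skipIndex_succ_zero, mul_zero, zero_add, zero_sub, qFib_neg_one]
    field_simp
  rw [ddet_eq_det_projVandermonde, det_projVandermonde_of_apply_zero_eq_zero _ _ (by simp), hv, hw,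
    det_projVandermonde_linear_combination, qFib_cassini x hq hs, hprod, hw₀,
    ← ddet_eq_det_projVandermonde]
  ring

theorem ddet_recurrence_general (q x s : K) (hq : q ≠ 0) (hs : s ≠ 0)
    (m k j : ℕ) (hk : 1 ≤ k) (hj : 1 ≤ j) (hjk : j ≤ k + 1)
    (hf : qFib q x s ((j : ℤ) * m) ≠ 0) :
    ddet q x s 0 m k j =
      s ^ (-(k : ℤ)) * (qFac q x s (k + 1) m / qFib q x s ((j : ℤ) * m)) *
      (-s) ^ (m * k.choose 2) * q ^ (k.choose 2 * (m + 1).choose 2) *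
      ddet q x (q ^ m * s) 0 m (k - 1) (j - 1) := by
  obtain ⟨k, rfl⟩ := Nat.exists_eq_add_of_le' hk
  obtain ⟨j, rfl⟩ := Nat.exists_eq_add_of_le' hj
  push_cast at hf ⊢
  rw [ddet_zero_succ_succ x hq hs, qFac_eq_mul_prod_skipIndex q x s m (Nat.le_of_succ_le_succ hjk),
    mul_div_cancel_left₀ _ hf, _root_.zpow_neg, ← Nat.cast_add_one, zpow_natCast,
    inv_pow, mul_pow, pow_mul, pow_mul']
  ring

theorem ddet_recurrence (q x s : K) (hq : q ≠ 0) (hs : s ≠ 0)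
    (m k j : ℕ) (hm : 1 ≤ m) (hk : 1 ≤ k) (hj : 1 ≤ j) (hjk : j ≤ k + 1)
    (hf : qFib q x s ((j : ℤ) * m) ≠ 0) :
    ddet q x s 0 m k j =
      s ^ (-(k : ℤ)) * (qFac q x s (k + 1) m / qFib q x s ((j : ℤ) * m)) *
      (-s) ^ (m * k.choose 2) * q ^ (k.choose 2 * (m + 1).choose 2) *
      ddet q x (q ^ m * s) 0 m (k - 1) (j - 1) :=
  ddet_recurrence_general q x s hq hs m k j hk hj hjk hf
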